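/- Let A ∈ ℝ^{m×d}, Y ∈ ℝ^{m×n}, λ > 0, 1 ≤ q < 2, and 0 < p < 2. Let X_k ∈ ℝ^{d×n} be such that every row of X_k and every row of AX_k − Y is nonzero. Define the diagonal matrices G_k ∈ ℝ^{m×m} with (G_k)_{ii} = 1/‖(AX_k − Y)^i‖₂^{2−q} and H_k ∈ ℝ^{d×d} with (H_k)_{ii} = 1/‖X_k^i‖₂^{2−p}, define Q_k(X) = Tr((AX − Y)ᵀG_k(AX − Y)) + λ·(p/q)·Tr(XᵀH_kX), and define J(X) = Σ_{i=1}^m ‖(AX − Y)^i‖₂^q + λ·Σ_{i=1}^d ‖X^i‖₂^p. If X_{k+1} ∈ ℝ^{d×n} satisfies Q_k(X_{k+1}) ≤ Q_k(X_k), then J(X_{k+1}) ≤ J(X_k). -/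

import Mathlib

/-! For `0 ≤ c ≤ 2` and `a > 0`, weighted AM–GM (concavity of `s ↦ s ^ (c / 2)` at `s = a²`) gives
`t ^ c ≤ (c / 2) · t² / a ^ (2 - c) + (1 - c / 2) · a ^ c`, with equality at `t = a`.
Applied row by row to the residual and to `X`, this shows that
`J X ≤ (q / 2) · Q_k X + (1 - q / 2) · ∑ ‖(A X_k - Y)^i‖^q + λ (1 - p / 2) · ∑ ‖X_k^i‖^p`
with equality at `X = X_k`, so any step that does not increase `Q_k` does not increase `J`. -/

open Matrix

/-- Euclidean norm of the i-th row of a matrix. -/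
noncomputable def rowNorm {m n : ℕ} (M : Matrix (Fin m) (Fin n) ℝ) (i : Fin m) : ℝ :=
  Real.sqrt (∑ j, M i j ^ 2)

namespace Real

lemma rpow_le_half_mul_sq_add {u c : ℝ} (hu : 0 ≤ u) (hc0 : 0 ≤ c) (hc2 : c ≤ 2) :
    u ^ c ≤ c / 2 * u ^ 2 + (1 - c / 2) := by
  have h := geom_mean_le_arith_mean2_weighted (div_nonneg hc0 zero_le_two) (by linarith)
    (sq_nonneg u) zero_le_one (add_sub_cancel _ _)
  have hsq : (u ^ 2) ^ (c / 2) = u ^ c := by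
    rw [← rpow_natCast, ← rpow_mul hu, Nat.cast_ofNat, mul_div_cancel₀ _ two_ne_zero]
  rwa [one_rpow, mul_one, mul_one, hsq] at h

lemma rpow_le_sq_majorant {a t c : ℝ} (ha : 0 < a) (ht : 0 ≤ t) (hc0 : 0 ≤ c) (hc2 : c ≤ 2) :
    t ^ c ≤ c / 2 * (1 / a ^ (2 - c) * t ^ 2) + (1 - c / 2) * a ^ c := by
  have h := mul_le_mul_of_nonneg_left (rpow_le_half_mul_sq_add (div_nonneg ht ha.le) hc0 hc2)
    (rpow_nonneg ha.le c)
  have hscale : a ^ c * (t / a) ^ c = t ^ c := by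
    rw [div_rpow ht ha.le, mul_div_cancel₀ _ (rpow_pos_of_pos ha c).ne']
  have hpow : a ^ (2 - c) = a ^ 2 / a ^ c := by
    rw [rpow_sub ha, rpow_two]
  rw [hscale] at h
  rw [hpow]
  exact h.trans_eq (by rw [div_pow, one_div_div]; ring)

lemma one_div_rpow_sub_mul_sq {a c : ℝ} (ha : 0 < a) : 1 / a ^ (2 - c) * a ^ 2 = a ^ c := by
  rw [rpow_sub ha, rpow_two]
  field_simp

end Real

section RowNorm

variable {m n : ℕ}

lemma rowNorm_nonneg (M : Matrix (Fin m) (Fin n) ℝ) (i : Fin m) :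
    0 ≤ rowNorm M i :=
  Real.sqrt_nonneg _

lemma rowNorm_sq (M : Matrix (Fin m) (Fin n) ℝ) (i : Fin m) :
    rowNorm M i ^ 2 = ∑ j, M i j ^ 2 :=
  Real.sq_sqrt (Finset.sum_nonneg fun _ _ => sq_nonneg _)

lemma rowNorm_pos {M : Matrix (Fin m) (Fin n) ℝ} {i : Fin m} (h : M i ≠ 0) :
    0 < rowNorm M i := by
  obtain ⟨j, hj⟩ := Function.ne_iff.mp h
  exact Real.sqrt_pos.mpr <| Finset.sum_pos' (fun _ _ => sq_nonneg _)
    ⟨j, Finset.mem_univ j, pow_two_pos_of_ne_zero hj⟩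

lemma trace_transpose_mul_diagonal_mul (B : Matrix (Fin m) (Fin n) ℝ) (w : Fin m → ℝ) :
    trace (Bᵀ * diagonal w * B) = ∑ i, w i * rowNorm B i ^ 2 := by
  simp only [rowNorm_sq, trace, diag_apply, mul_apply, transpose_apply,
    diagonal_apply, mul_ite, mul_zero, Finset.sum_ite_eq', Finset.mem_univ, if_true, Finset.mul_sum]
  rw [Finset.sum_comm]
  exact Finset.sum_congr rfl fun i _ => Finset.sum_congr rfl fun j _ => by ring

lemma sum_rowNorm_rpow_le_trace {c : ℝ} (hc0 : 0 ≤ c) (hc2 : c ≤ 2)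
    {B : Matrix (Fin m) (Fin n) ℝ} (hB : ∀ i, B i ≠ 0) (B' : Matrix (Fin m) (Fin n) ℝ) :
    ∑ i, rowNorm B' i ^ c ≤
      c / 2 * trace (B'ᵀ * diagonal (fun i => 1 / rowNorm B i ^ (2 - c)) * B') +
        (1 - c / 2) * ∑ i, rowNorm B i ^ c := by
  rw [trace_transpose_mul_diagonal_mul, Finset.mul_sum, Finset.mul_sum, ← Finset.sum_add_distrib]
  exact Finset.sum_le_sum fun i _ =>
    Real.rpow_le_sq_majorant (rowNorm_pos (hB i)) (rowNorm_nonneg B' i) hc0 hc2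

lemma trace_self_eq_sum_rowNorm_rpow (c : ℝ) {B : Matrix (Fin m) (Fin n) ℝ} (hB : ∀ i, B i ≠ 0) :
    trace (Bᵀ * diagonal (fun i => 1 / rowNorm B i ^ (2 - c)) * B) = ∑ i, rowNorm B i ^ c := by
  rw [trace_transpose_mul_diagonal_mul]
  exact Finset.sum_congr rfl fun i _ => Real.one_div_rpow_sub_mul_sq (rowNorm_pos (hB i))

end RowNorm

/-- One-step descent of the IQM: if Q_k(X_{k+1}) ≤ Q_k(X_k) then J(X_{k+1}) ≤ J(X_k),
for 1 ≤ q < 2 and 0 < p < 2. -/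
theorem stmt_12 {m d n : ℕ} (A : Matrix (Fin m) (Fin d) ℝ) (Y : Matrix (Fin m) (Fin n) ℝ)
    (lam q p : ℝ) (hlam : 0 < lam) (hq1 : 1 ≤ q) (hq2 : q < 2) (hp0 : 0 < p) (hp2 : p < 2)
    (Xk Xk1 : Matrix (Fin d) (Fin n) ℝ)
    (hrowX : ∀ i, Xk i ≠ 0) (hrowR : ∀ i, (A * Xk - Y) i ≠ 0) :
    let Gk : Matrix (Fin m) (Fin m) ℝ :=
      Matrix.diagonal (fun i => 1 / rowNorm (A * Xk - Y) i ^ (2 - q))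
    let Hk : Matrix (Fin d) (Fin d) ℝ :=
      Matrix.diagonal (fun i => 1 / rowNorm Xk i ^ (2 - p))
    let Qk : Matrix (Fin d) (Fin n) ℝ → ℝ := fun X =>
      Matrix.trace ((A * X - Y)ᵀ * Gk * (A * X - Y)) + lam * (p / q) * Matrix.trace (Xᵀ * Hk * X)
    let J : Matrix (Fin d) (Fin n) ℝ → ℝ := fun X =>
      ∑ i, rowNorm (A * X - Y) i ^ q + lam * ∑ i, rowNorm X i ^ p
    Qk Xk1 ≤ Qk Xk → J Xk1 ≤ J Xk := by
  intro Gk Hk Qk J hQ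
  have hq0 : 0 < q := one_pos.trans_le hq1
  have hresidual := sum_rowNorm_rpow_le_trace hq0.le hq2.le hrowR (A * Xk1 - Y)
  have hrow := sum_rowNorm_rpow_le_trace hp0.le hp2.le hrowX Xk1
  simp only [Qk, Gk, Hk, trace_self_eq_sum_rowNorm_rpow _ hrowR,
    trace_self_eq_sum_rowNorm_rpow _ hrowX] at hQ
  have hscale : ∀ T S : ℝ, q / 2 * (T + lam * (p / q) * S) = q / 2 * T + lam * (p / 2) * S :=
    fun T S => by field_simp
  have hQ' := mul_le_mul_of_nonneg_left hQ (half_pos hq0).le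
  rw [hscale, hscale] at hQ'
  linear_combination hresidual + lam * hrow + hQ'
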